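/- The graph scattering transform is permutation covariant: for every N×N permutation matrix P, every path p ∈ 𝒫_J and every f ∈ ℂ^N, S[PG][p](P f) = P (S[G][p] f). -/

import Mathlib

open scoped BigOperators

noncomputable section

/-- Signals on a graph with `N` vertices. -/
abbrev GV (N : ℕ) := EuclideanSpace ℂ (Fin N)

/-- Entrywise absolute value (modulus) of a signal. -/
def absVec {N : ℕ} (f : GV N) : GV N := WithLp.toLp 2 (fun n => (‖f n‖ : ℂ))

/-- The low-pass wavelet operator `Q_J f = ∑ l, φ̂(2^J λ_l) (u_l^* f) u_l`. -/
def Qlow {N : ℕ} (J : ℤ) (phiHat : ℝ → ℂ) (lam : Fin N → ℝ) (u : Fin N → GV N)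
    (f : GV N) : GV N :=
  ∑ l, (phiHat ((2:ℝ) ^ J * lam l) * (inner ℂ (u l) f : ℂ)) • u l

/-- The band-pass wavelet operator `Q_j f = ∑ l, ψ̂(2^{-j} λ_l) (u_l^* f) u_l`. -/
def Qband {N : ℕ} (psiHat : ℝ → ℂ) (lam : Fin N → ℝ) (u : Fin N → GV N) (j : ℤ)
    (f : GV N) : GV N :=
  ∑ l, (psiHat ((2:ℝ) ^ (-j) * lam l) * (inner ℂ (u l) f : ℂ)) • u l

/-- Admissible scales: integers `j > -J`. -/
abbrev Scale (J : ℤ) := {j : ℤ // -J < j}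

/-- The scattering propagator `U[p] = U[j_m] ∘ ⋯ ∘ U[j₁]` along a path `p = (j₁, …, j_m)`,
where `U[j] f = |Q_j f|` entrywise; `U[∅] f = f`. -/
def Uprop {N : ℕ} {J : ℤ} (psiHat : ℝ → ℂ) (lam : Fin N → ℝ) (u : Fin N → GV N)
    (p : List (Scale J)) (f : GV N) : GV N :=
  p.foldl (fun g j => absVec (Qband psiHat lam u j.1 g)) f

/-- The windowed scattering transform `S[p] f = Q_J (U[p] f)`. -/
def Sop {N : ℕ} (J : ℤ) (phiHat psiHat : ℝ → ℂ) (lam : Fin N → ℝ) (u : Fin N → GV N)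
    (p : List (Scale J)) (f : GV N) : GV N :=
  Qlow J phiHat lam u (Uprop psiHat lam u p f)

/-- Action of the `N×N` permutation matrix `P` associated with `σ` on a signal:
`(P f)(n) = f(σ⁻¹ n)`. -/
def permVec {N : ℕ} (σ : Equiv.Perm (Fin N)) (f : GV N) : GV N := WithLp.toLp 2 (fun n => f (σ⁻¹ n))

/-! A permutation matrix is unitary, so it preserves the spectral coefficients `u_l^* f` when the
eigenvectors are permuted along with the signal; hence it commutes with every spectral filter
`Q_J`, `Q_j`, and it commutes with the entrywise modulus, hence with each `U[j]`. -/

theorem permVec_eq_piLpCongrLeft {N : ℕ} (σ : Equiv.Perm (Fin N)) :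
    permVec σ = LinearIsometryEquiv.piLpCongrLeft 2 ℂ ℂ σ :=
  rfl

theorem LinearIsometryEquiv.map_sum_inner_smul {𝕜 E F ι : Type*} [RCLike 𝕜]
    [NormedAddCommGroup E] [InnerProductSpace 𝕜 E] [NormedAddCommGroup F] [InnerProductSpace 𝕜 F]
    [Fintype ι] (e : E ≃ₗᵢ[𝕜] F) (h : ι → 𝕜) (u : ι → E) (f : E) :
    ∑ l, (h l * inner 𝕜 (e (u l)) (e f)) • e (u l) = e (∑ l, (h l * inner 𝕜 (u l) f) • u l) := by
  simp only [e.inner_map_map, map_sum, map_smul]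

theorem Qlow_permVec {N : ℕ} (J : ℤ) (phiHat : ℝ → ℂ) (lam : Fin N → ℝ) (u : Fin N → GV N)
    (σ : Equiv.Perm (Fin N)) (f : GV N) :
    Qlow J phiHat lam (fun l => permVec σ (u l)) (permVec σ f)
      = permVec σ (Qlow J phiHat lam u f) := by
  simp only [Qlow, permVec_eq_piLpCongrLeft, LinearIsometryEquiv.map_sum_inner_smul]

theorem Qband_permVec {N : ℕ} (psiHat : ℝ → ℂ) (lam : Fin N → ℝ) (u : Fin N → GV N) (j : ℤ)
    (σ : Equiv.Perm (Fin N)) (f : GV N) :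
    Qband psiHat lam (fun l => permVec σ (u l)) j (permVec σ f)
      = permVec σ (Qband psiHat lam u j f) := by
  simp only [Qband, permVec_eq_piLpCongrLeft, LinearIsometryEquiv.map_sum_inner_smul]

theorem absVec_permVec {N : ℕ} (σ : Equiv.Perm (Fin N)) (f : GV N) :
    absVec (permVec σ f) = permVec σ (absVec f) :=
  rfl

theorem Uprop_permVec {N : ℕ} {J : ℤ} (psiHat : ℝ → ℂ) (lam : Fin N → ℝ) (u : Fin N → GV N)
    (σ : Equiv.Perm (Fin N)) (p : List (Scale J)) (f : GV N) :
    Uprop psiHat lam (fun l => permVec σ (u l)) p (permVec σ f)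
      = permVec σ (Uprop psiHat lam u p f) :=
  List.foldl_hom (permVec σ) fun g j => by
    rw [Qband_permVec, absVec_permVec]

/-- permutation covariance of the scattering transform:
`S[PG][p](Pf) = P (S[G][p] f)` for every path `p`. -/
theorem scattering_permutation_covariance
    (N : ℕ)
    (J : ℤ) (phiHat psiHat : ℝ → ℂ)
    (lam : Fin N → ℝ) (u : Fin N → GV N)
    (σ : Equiv.Perm (Fin N)) (p : List (Scale J)) (f : GV N) :
    Sop J phiHat psiHat lam (fun l => permVec σ (u l)) p (permVec σ f)
      = permVec σ (Sop J phiHat psiHat lam u p f) := by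
  rw [Sop, Sop, Uprop_permVec, Qlow_permVec]

end
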